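/- arXiv:math/0607517 — 3 statements merged into one kernel-verified Lean document; each statement's English description precedes it below -/
import Mathlib

section
/- Let G_3 be the directed graph with adjacency matrix A = [[1,1],[1,0]] (Fibonacci graph). Define c_n(1), c_n(2) by c_0(1)=c_0(2)=1 and c_{n+1}(1) = Σ_{k=0}^n c_{n-k}(1)(c_k(1)+c_k(2)), c_{n+1}(2) = Σ_{k=0}^n c_{n-k}(2) c_k(1). Then for n ≥ 1, c_n(1) = (2/n)·binom(3n+1, n-1) and c_n(2) = (1/n)·binom(3n, n-1). -/
/-!
Let `B(x)` be the generating function of `m`-ary trees, `B = 1 + x B^m`. The Raney numbers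
`raney m p n = [xⁿ] B^p` obey `B^(p+1) = B^p + x B^(p+m)` and `B^(p+q) = B^p B^q`, and Lagrange
inversion gives `raney m p n = p / (m n + p) * choose (m n + p) n`; here that formula is verified
by induction along the recursion. For `m = 3` the pair `(B², B)` solves the Fibonacci-graph
system, since `B² = B + x B⁴ = 1 + x B² (B² + B)` and `B = 1 + x B · B²`, and the system
determines its solution uniquely. So `c₁ = B²` and `c₂ = B`.
-/

open Finset

def raney (m : ℕ) : ℕ → ℕ → ℕ
  | 0, 0 => 1
  | 0, _ + 1 => 0
  | _ + 1, 0 => 1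
  | p + 1, n + 1 => raney m p (n + 1) + raney m (p + m) n
termination_by p n => (n, p)

section Raney

variable (m : ℕ)

@[simp]
lemma raney_zero_right (p : ℕ) : raney m p 0 = 1 := by
  cases p <;> rw [raney]

@[simp]
lemma raney_zero_succ (n : ℕ) : raney m 0 (n + 1) = 0 := by
  rw [raney]

lemma raney_succ_succ (p n : ℕ) :
    raney m (p + 1) (n + 1) = raney m p (n + 1) + raney m (p + m) n := by
  rw [raney]

lemma raney_one_succ (n : ℕ) : raney m 1 (n + 1) = raney m m n := by
  rw [raney_succ_succ, raney_zero_succ, zero_add, zero_add]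

lemma raney_add (q n : ℕ) :
    ∀ p, raney m (p + q) n = ∑ k ∈ range (n + 1), raney m p k * raney m q (n - k) := by
  induction n with
  | zero => simp
  | succ n ih =>
    intro p
    induction p with
    | zero =>
      rw [sum_range_succ']
      simp
    | succ p ihp =>
      have hsplit : ∀ k ∈ range (n + 1),
          raney m (p + 1) (k + 1) * raney m q (n + 1 - (k + 1)) =
            raney m p (k + 1) * raney m q (n + 1 - (k + 1)) +
              raney m (p + m) k * raney m q (n - k) := by
        intro k _
        rw [raney_succ_succ, add_mul, Nat.add_sub_add_right]
      rw [show p + 1 + q = p + q + 1 by ring, raney_succ_succ, ihp,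
        show p + q + m = p + m + q by ring, ih,
        sum_range_succ' _ (n + 1), sum_range_succ' _ (n + 1), sum_congr rfl hsplit, sum_add_distrib]
      simp only [raney_zero_right]
      ring

lemma mul_raney_eq_mul_choose (n : ℕ) :
    ∀ p, (m * n + p) * raney m p n = p * (m * n + p).choose n := by
  induction n with
  | zero => simp
  | succ n ih =>
    intro p
    induction p with
    | zero => simp
    | succ p ihp =>
      obtain ⟨M, hM⟩ : ∃ M, m * (n + 1) + p = M := ⟨_, rfl⟩
      rcases Nat.eq_zero_or_pos M with hM0 | hMpos
      · obtain ⟨rfl, rfl⟩ : m = 0 ∧ p = 0 := by constructor <;> nlinarith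
        cases n <;> simp [raney_succ_succ, Nat.choose_eq_zero_of_lt]
      have hq := ih (p + m)
      rw [show m * n + (p + m) = M by rw [← hM]; ring] at hq
      rw [hM] at ihp
      have hpascal := Nat.choose_succ_succ' M n
      have habs := Nat.add_one_mul_choose_eq M n
      rw [show m * (n + 1) + (p + 1) = M + 1 by omega, raney_succ_succ]
      have hMQ : (M : ℚ) * ((n : ℚ) + 1) ≠ 0 := by positivity
      qify at hM ihp hq hpascal habs ⊢
      apply mul_left_cancel₀ hMQ
      linear_combination ((n : ℚ) + 1) * (M + 1) * (ihp + hq) - (n + 1) * (M + 1) * p * hpascal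
        + m * (n + 1) * habs + (n + 1) * ((M + 1).choose (n + 1) : ℚ) * hM

lemma succ_mul_raney_succ_succ (n p : ℕ) :
    (n + 1) * raney m (p + 1) (n + 1) = (p + 1) * (m * (n + 1) + p).choose n := by
  have h := mul_raney_eq_mul_choose m (n + 1) (p + 1)
  have habs := Nat.add_one_mul_choose_eq (m * (n + 1) + p) n
  rw [show m * (n + 1) + (p + 1) = m * (n + 1) + p + 1 by omega] at h
  apply Nat.eq_of_mul_eq_mul_left (Nat.add_one_pos (m * (n + 1) + p))
  linear_combination (n + 1) * h + (p + 1) * habs.symm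

end Raney

lemma raney_three_two_succ (n : ℕ) :
    raney 3 2 (n + 1) =
      ∑ k ∈ range (n + 1), raney 3 2 (n - k) * (raney 3 2 k + raney 3 1 k) := by
  rw [raney_succ_succ, raney_one_succ, (raney_add 3 2 n 1 : raney 3 3 n = _),
    (raney_add 3 2 n 2 : raney 3 4 n = _), ← sum_add_distrib]
  exact sum_congr rfl fun k _ => by ring

lemma raney_three_one_succ (n : ℕ) :
    raney 3 1 (n + 1) = ∑ k ∈ range (n + 1), raney 3 1 (n - k) * raney 3 2 k := by
  rw [raney_one_succ, (raney_add 3 1 n 2 : raney 3 3 n = _)]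
  exact sum_congr rfl fun k _ => mul_comm _ _

lemma eq_raney_of_fibonacci_rec (c₁ c₂ : ℕ → ℕ) (h01 : c₁ 0 = 1) (h02 : c₂ 0 = 1)
    (hrec1 : ∀ n, c₁ (n + 1) = ∑ k ∈ range (n + 1), c₁ (n - k) * (c₁ k + c₂ k))
    (hrec2 : ∀ n, c₂ (n + 1) = ∑ k ∈ range (n + 1), c₂ (n - k) * c₁ k) (n : ℕ) :
    c₁ n = raney 3 2 n ∧ c₂ n = raney 3 1 n := by
  induction n using Nat.strong_induction_on with
  | _ n ih =>
    cases n with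
    | zero => simp [h01, h02]
    | succ n =>
      have hk : ∀ k ∈ range (n + 1), c₁ k = raney 3 2 k ∧ c₂ k = raney 3 1 k :=
        fun k hk => ih k (by simp at hk; omega)
      have hnk : ∀ k ∈ range (n + 1),
          c₁ (n - k) = raney 3 2 (n - k) ∧ c₂ (n - k) = raney 3 1 (n - k) :=
        fun k _ => ih (n - k) (by omega)
      rw [hrec1, hrec2, raney_three_two_succ, raney_three_one_succ]
      constructor <;> refine sum_congr rfl fun k hmem => ?_
      · rw [(hk k hmem).1, (hk k hmem).2, (hnk k hmem).1]
      · rw [(hk k hmem).1, (hnk k hmem).2]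

/-- For the Fibonacci graph `G₃` with adjacency matrix `[[1,1],[1,0]]`, the `G₃`-Catalan
numbers rooted at the two vertices, defined by `c₀(1) = c₀(2) = 1` and the recurrences
`c_{n+1}(1) = Σ_{k=0}^n c_{n-k}(1) (c_k(1) + c_k(2))`,
`c_{n+1}(2) = Σ_{k=0}^n c_{n-k}(2) c_k(1)`, satisfy for `n ≥ 1`:
`c_n(1) = (2/n) * binom(3n+1, n-1)` and `c_n(2) = (1/n) * binom(3n, n-1)`. -/
theorem fibonacci_graph_catalan (c₁ c₂ : ℕ → ℕ)
    (h01 : c₁ 0 = 1) (h02 : c₂ 0 = 1)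
    (hrec1 : ∀ n, c₁ (n + 1) =
      ∑ k ∈ Finset.range (n + 1), c₁ (n - k) * (c₁ k + c₂ k))
    (hrec2 : ∀ n, c₂ (n + 1) =
      ∑ k ∈ Finset.range (n + 1), c₂ (n - k) * c₁ k) :
    ∀ n : ℕ, 1 ≤ n →
      (c₁ n : ℚ) = (2 / n) * (Nat.choose (3 * n + 1) (n - 1)) ∧
      (c₂ n : ℚ) = (1 / n) * (Nat.choose (3 * n) (n - 1)) := by
  intro n hn
  obtain ⟨n, rfl⟩ := Nat.exists_eq_add_of_le' hn
  obtain ⟨h1, h2⟩ := eq_raney_of_fibonacci_rec c₁ c₂ h01 h02 hrec1 hrec2 (n + 1)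
  have e1 : ((n : ℚ) + 1) * raney 3 2 (n + 1) = 2 * (3 * (n + 1) + 1).choose n := by
    exact_mod_cast succ_mul_raney_succ_succ 3 n 1
  have e2 : ((n : ℚ) + 1) * raney 3 1 (n + 1) = (3 * (n + 1)).choose n := by
    exact_mod_cast (succ_mul_raney_succ_succ 3 n 0).trans (one_mul _)
  rw [h1, h2, Nat.add_sub_cancel]
  push_cast
  constructor
  · field_simp
    linear_combination e1
  · field_simp
    linear_combination e2
end

section
/- Let A be an N×N nonnegative integer matrix and define c_n(i) by c_0(i)=1 and c_{n+1}(i) = Σ_{k=0}^n c_{n-k}(i) Σ_{j=1}^N A(j,i) c_k(j). Then c_n(i) ≤ ‖A‖_1^n · Catalan(n) for all n and i, where ‖A‖_1 = max_{1≤i≤N} Σ_{j=1}^N A(j,i). -/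
/-! Strong induction on `n`. Bounding every `c k j` by the inductive bound `M ^ k * catalan k`,
where `M` is the largest column sum of `A`, the inner sum `Σ_j A j i * c k j` is at most
`M ^ (k + 1) * catalan k`, and the recurrence collapses to `M ^ (n + 1)` times the Catalan
convolution `Σ_k catalan (n - k) * catalan k = catalan (n + 1)`. -/

open Finset

theorem catalan_succ_eq_sum_range (n : ℕ) :
    catalan (n + 1) = ∑ k ∈ range (n + 1), catalan (n - k) * catalan k := by
  rw [catalan_succ, Fin.sum_univ_eq_sum_range (fun k => catalan k * catalan (n - k))]
  exact sum_congr rfl fun k _ => mul_comm _ _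

theorem sum_range_pow_mul_catalan_convolution (M n : ℕ) :
    ∑ k ∈ range (n + 1), M ^ (n - k) * catalan (n - k) * (M * (M ^ k * catalan k)) =
      M ^ (n + 1) * catalan (n + 1) := by
  rw [catalan_succ_eq_sum_range, mul_sum]
  refine sum_congr rfl fun k hk => ?_
  have hk : n - k + k = n := Nat.sub_add_cancel (Nat.le_of_lt_succ (mem_range.mp hk))
  calc M ^ (n - k) * catalan (n - k) * (M * (M ^ k * catalan k))
      = M ^ (n - k + k + 1) * (catalan (n - k) * catalan k) := by ring
    _ = M ^ (n + 1) * (catalan (n - k) * catalan k) := by rw [hk]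

theorem sum_mul_le_sup_colSum_mul {ι : Type*} [Fintype ι] (A : ι → ι → ℕ) (x : ι → ℕ)
    {B : ℕ} (hx : ∀ j, x j ≤ B) (i : ι) :
    ∑ j, A j i * x j ≤ (univ.sup fun i => ∑ j, A j i) * B :=
  calc ∑ j, A j i * x j ≤ ∑ j, A j i * B := by gcongr with j; exact hx j
    _ = (∑ j, A j i) * B := (sum_mul ..).symm
    _ ≤ (univ.sup fun i => ∑ j, A j i) * B :=
      Nat.mul_le_mul_right _ (le_sup (f := fun i => ∑ j, A j i) (mem_univ i))

/-- Let `A` be an `N × N` nonnegative integer matrix and define `c n i` by `c 0 i = 1` and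
`c (n+1) i = Σ_{k=0}^n c (n-k) i * Σ_j A j i * c k j`.  Then
`c n i ≤ ‖A‖₁ ^ n * catalan n`, where `‖A‖₁ = max_i Σ_j A j i`. -/
theorem gCatalan_le_norm_pow_catalan {N : ℕ} (A : Fin N → Fin N → ℕ)
    (c : ℕ → Fin N → ℕ) (h0 : ∀ i, c 0 i = 1)
    (hrec : ∀ n i, c (n + 1) i =
      ∑ k ∈ Finset.range (n + 1), c (n - k) i * ∑ j, A j i * c k j) :
    ∀ n i, c n i ≤ (Finset.univ.sup fun i => ∑ j, A j i) ^ n * catalan n := by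
  set M := univ.sup fun i => ∑ j, A j i
  intro n
  induction n using Nat.strong_induction_on with
  | _ n ih =>
    intro i
    rcases n with _ | n
    · simp [h0]
    calc c (n + 1) i = ∑ k ∈ range (n + 1), c (n - k) i * ∑ j, A j i * c k j := hrec n i
      _ ≤ ∑ k ∈ range (n + 1), M ^ (n - k) * catalan (n - k) * (M * (M ^ k * catalan k)) := by
        gcongr with k hk
        · exact ih (n - k) (by omega) i
        · exact sum_mul_le_sup_colSum_mul A _ (ih k (by simpa [Nat.lt_succ_iff] using hk)) i
      _ = M ^ (n + 1) * catalan (n + 1) := sum_range_pow_mul_catalan_convolution M n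
end

section
/- Let A be the adjacency matrix of an irreducible (strongly connected) directed graph G on N vertices and c_n(i) the G-Catalan numbers. Then limsup_n (c_n(i))^{1/n} = limsup_n (c_n(j))^{1/n} for all i,j; i.e., the radius of convergence of the generating function f_i(x) = Σ c_n(i) x^n is independent of i. -/
open Filter Finset

private lemma catalan_le_four_pow (n : ℕ) : catalan n ≤ 4 ^ n := by
  have h1 : catalan n ≤ Nat.centralBinom n := by
    rw [← succ_mul_catalan_eq_centralBinom]
    exact Nat.le_mul_of_pos_left _ (Nat.succ_pos n)
  have h2 : Nat.centralBinom n ≤ 2 ^ (2 * n) := by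
    have := Finset.single_le_sum (f := fun k => Nat.choose (2 * n) k)
      (fun _ _ => Nat.zero_le _) (Finset.mem_range.mpr (show n < 2 * n + 1 by omega))
    simpa [Nat.sum_range_choose, Nat.centralBinom] using this
  calc catalan n ≤ 2 ^ (2 * n) := h1.trans h2
    _ = 4 ^ n := by rw [pow_mul]; norm_num

/-- Let `A` be the adjacency matrix of an irreducible (strongly connected) directed graph
on `N` vertices (for all `i, j` there is `m ≥ 1` with `(A^m) j i > 0`) and let `c n i` be
the `G`-Catalan numbers.  Then `limsup_n (c n i)^(1/n)` is independent of `i`; i.e. the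
radius of convergence of the generating function `f_i` does not depend on `i`. -/
theorem gCatalan_limsup_eq {N : ℕ} (A : Matrix (Fin N) (Fin N) ℕ)
    (hirr : ∀ i j : Fin N, ∃ m : ℕ, 1 ≤ m ∧ 0 < (A ^ m) j i)
    (c : ℕ → Fin N → ℕ) (h0 : ∀ i, c 0 i = 1)
    (hrec : ∀ n i, c (n + 1) i =
      ∑ k ∈ Finset.range (n + 1), c (n - k) i * ∑ j, A j i * c k j) :
    ∀ i j : Fin N,
      Filter.limsup (fun n : ℕ => ((c n i : ℝ)) ^ (1 / (n : ℝ))) Filter.atTop =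
        Filter.limsup (fun n : ℕ => ((c n j : ℝ)) ^ (1 / (n : ℝ))) Filter.atTop := by
  -- every vertex has an incoming edge
  have hedge : ∀ i : Fin N, ∃ l, 0 < A l i := by
    intro i
    obtain ⟨m, hm, hpos⟩ := hirr i i
    obtain ⟨m', rfl⟩ : ∃ m', m = m' + 1 := ⟨m - 1, (Nat.succ_pred_eq_of_pos hm).symm⟩
    rw [pow_succ, Matrix.mul_apply] at hpos
    obtain ⟨l, -, hl⟩ := Finset.exists_ne_zero_of_sum_ne_zero hpos.ne'
    exact ⟨l, Nat.pos_of_ne_zero fun h => hl (by simp [h])⟩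
  -- c n i ≥ 1
  have hone : ∀ n (i : Fin N), 1 ≤ c n i := by
    intro n
    induction n with
    | zero => intro i; simp [h0]
    | succ n ih =>
      intro i
      obtain ⟨l, hl⟩ := hedge i
      have h1 : 1 ≤ ∑ j, A j i * c 0 j := by
        refine le_trans ?_ (Finset.single_le_sum (f := fun j => A j i * c 0 j)
          (fun _ _ => Nat.zero_le _) (Finset.mem_univ l))
        simp [h0]; omega
      have h2 : 1 ≤ c (n - 0) i * ∑ j, A j i * c 0 j :=
        le_trans h1 (Nat.le_mul_of_pos_left _ (by simpa using Nat.pos_of_ne_zero (Nat.one_le_iff_ne_zero.mp (ih i))))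
      rw [hrec]
      exact le_trans h2 (Finset.single_le_sum
        (f := fun k => c (n - k) i * ∑ j, A j i * c k j)
        (fun _ _ => Nat.zero_le _) (Finset.mem_range.mpr (Nat.succ_pos n)))
  -- key step : an edge from j to i gives c n j ≤ c (n+1) i
  have hkey : ∀ n (jj ii : Fin N), 0 < A jj ii → c n jj ≤ c (n + 1) ii := by
    intro n jj ii h
    rw [hrec]
    have h1 : c n jj ≤ ∑ j, A j ii * c n j := by
      refine le_trans ?_ (Finset.single_le_sum (f := fun j => A j ii * c n j)
        (fun _ _ => Nat.zero_le _) (Finset.mem_univ jj))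
      exact Nat.le_mul_of_pos_left _ h
    have h2 : c n jj ≤ c (n - n) ii * ∑ j, A j ii * c n j := by
      simpa [Nat.sub_self, h0] using h1
    exact le_trans h2 (Finset.single_le_sum
      (f := fun k => c (n - k) ii * ∑ j, A j ii * c k j)
      (fun _ _ => Nat.zero_le _) (Finset.mem_range.mpr (Nat.lt_succ_self n)))
  -- a path of length m from j to i gives c n j ≤ c (n+m) i
  have hpow : ∀ m n (jj ii : Fin N), 0 < (A ^ m) jj ii → c n jj ≤ c (n + m) ii := by
    intro m
    induction m with
    | zero =>
      intro n jj ii h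
      rw [pow_zero, Matrix.one_apply] at h
      split_ifs at h with heq
      · subst heq; simp
      · simp at h
    | succ m ih =>
      intro n jj ii h
      rw [pow_succ, Matrix.mul_apply] at h
      obtain ⟨l, -, hl⟩ := Finset.exists_ne_zero_of_sum_ne_zero h.ne'
      have h1 : 0 < (A ^ m) jj l := Nat.pos_of_ne_zero fun h => hl (by simp [h])
      have h2 : 0 < A l ii := Nat.pos_of_ne_zero fun h => hl (by simp [h])
      calc c n jj ≤ c (n + m) l := ih n jj l h1
        _ ≤ c (n + m + 1) ii := hkey (n + m) l ii h2
  -- uniform exponential upper bound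
  set S : ℕ := (∑ i, ∑ j, A j i) + 1 with hSdef
  have hS1 : 1 ≤ S := Nat.le_add_left 1 _
  have hS : ∀ i : Fin N, ∑ j, A j i ≤ S := by
    intro i
    refine le_trans (Finset.single_le_sum (f := fun i => ∑ j, A j i)
      (fun _ _ => Nat.zero_le _) (Finset.mem_univ i)) (Nat.le_succ _)
  have hub : ∀ n (i : Fin N), c n i ≤ catalan n * S ^ n := by
    intro n
    induction n using Nat.strong_induction_on with
    | _ n ih =>
      match n with
      | 0 => intro i; simp [h0, catalan_zero]
      | (n + 1) =>
        intro i
        rw [hrec]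
        have hterm : ∀ k ∈ Finset.range (n + 1),
            c (n - k) i * ∑ j, A j i * c k j
              ≤ (catalan (n - k) * catalan k) * S ^ (n + 1) := by
          intro k hk
          have hk' : k ≤ n := Nat.lt_succ_iff.mp (Finset.mem_range.mp hk)
          have hin : ∑ j, A j i * c k j ≤ S * (catalan k * S ^ k) := by
            calc ∑ j, A j i * c k j
                ≤ ∑ j, A j i * (catalan k * S ^ k) :=
                  Finset.sum_le_sum fun j _ =>
                    Nat.mul_le_mul_left _ (ih k (Nat.lt_succ_of_le hk') j)
              _ = (∑ j, A j i) * (catalan k * S ^ k) := by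
                  rw [← Finset.sum_mul]
              _ ≤ S * (catalan k * S ^ k) :=
                  Nat.mul_le_mul_right _ (hS i)
          calc c (n - k) i * ∑ j, A j i * c k j
              ≤ (catalan (n - k) * S ^ (n - k)) * (S * (catalan k * S ^ k)) :=
                Nat.mul_le_mul (ih (n - k) (Nat.lt_succ_of_le (Nat.sub_le n k)) i) hin
            _ = (catalan (n - k) * catalan k) * (S ^ (n - k) * S ^ k * S) := by
                ring
            _ = (catalan (n - k) * catalan k) * S ^ (n + 1) := by
                rw [← pow_add, Nat.sub_add_cancel hk', ← pow_succ]
        calc ∑ k ∈ Finset.range (n + 1), c (n - k) i * ∑ j, A j i * c k j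
            ≤ ∑ k ∈ Finset.range (n + 1),
                (catalan (n - k) * catalan k) * S ^ (n + 1) :=
              Finset.sum_le_sum hterm
          _ = (∑ k ∈ Finset.range (n + 1), catalan k * catalan (n - k)) * S ^ (n+1) := by
              rw [← Finset.sum_mul]
              congr 1
              exact Finset.sum_congr rfl fun k _ => by ring
          _ = catalan (n + 1) * S ^ (n + 1) := by
              rw [catalan_succ']
              congr 1
              rw [Finset.Nat.sum_antidiagonal_eq_sum_range_succ
                (f := fun a b => catalan a * catalan b)]
        -- done
  -- the real bound B
  set B : ℝ := ((4 * S : ℕ) : ℝ) with hBdef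
  have hB1 : (1 : ℝ) ≤ B := by
    rw [hBdef]
    exact_mod_cast Nat.one_le_iff_ne_zero.mpr (by positivity)
  have hB0 : (0 : ℝ) < B := lt_of_lt_of_le one_pos hB1
  have hcB : ∀ n (i : Fin N), (c n i : ℝ) ≤ B ^ n := by
    intro n i
    have : c n i ≤ (4 * S) ^ n := by
      calc c n i ≤ catalan n * S ^ n := hub n i
        _ ≤ 4 ^ n * S ^ n := Nat.mul_le_mul_right _ (catalan_le_four_pow n)
        _ = (4 * S) ^ n := (mul_pow 4 S n).symm
    rw [hBdef]
    exact_mod_cast this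
  have hc1 : ∀ n (i : Fin N), (1 : ℝ) ≤ (c n i : ℝ) := fun n i => by
    exact_mod_cast hone n i
  -- properties of u i n = (c n i)^(1/n)
  have hu1 : ∀ (i : Fin N) (n : ℕ), (1 : ℝ) ≤ (c n i : ℝ) ^ (1 / (n : ℝ)) := by
    intro i n
    have := Real.rpow_le_rpow_of_exponent_le (hc1 n i)
      (show (0 : ℝ) ≤ 1 / (n : ℝ) by positivity)
    simpa [Real.rpow_zero] using this
  have huB : ∀ (i : Fin N) (n : ℕ), (c n i : ℝ) ^ (1 / (n : ℝ)) ≤ B := by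
    intro i n
    rcases Nat.eq_zero_or_pos n with rfl | hn
    · simpa [Real.rpow_zero] using hB1
    · have hne : (n : ℝ) ≠ 0 := by positivity
      calc (c n i : ℝ) ^ (1 / (n : ℝ))
          ≤ (B ^ n) ^ (1 / (n : ℝ)) :=
            Real.rpow_le_rpow (by positivity) (hcB n i) (by positivity)
        _ = B := by
            rw [← Real.rpow_natCast B n, ← Real.rpow_mul hB0.le,
              mul_one_div, div_self hne, Real.rpow_one]
  -- one-sided limsup inequality
  have key : ∀ i j : Fin N,
      limsup (fun n : ℕ => ((c n j : ℝ)) ^ (1 / (n : ℝ))) atTop ≤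
        limsup (fun n : ℕ => ((c n i : ℝ)) ^ (1 / (n : ℝ))) atTop := by
    intro i j
    obtain ⟨m, -, hm⟩ := hirr i j
    have hshift : ∀ n, c n j ≤ c (n + m) i := fun n => hpow m n j i hm
    -- the error factor
    set e : ℕ → ℝ := fun n => B ^ ((m : ℝ) / (n : ℝ)) with hedef
    have he1 : Tendsto e atTop (nhds 1) := by
      have h1 : Tendsto (fun n : ℕ => (m : ℝ) / (n : ℝ)) atTop (nhds 0) :=
        tendsto_const_div_atTop_nhds_zero_nat _
      have h2 : ContinuousAt (fun t : ℝ => B ^ t) 0 :=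
        Real.continuousAt_const_rpow hB0.ne'
      have := h2.tendsto.comp h1
      simpa [Real.rpow_zero, Function.comp_def, hedef] using this
    have hev : ∀ᶠ n : ℕ in atTop,
        ((c n j : ℝ)) ^ (1 / (n : ℝ)) ≤
          ((c (n + m) i : ℝ)) ^ (1 / ((n + m : ℕ) : ℝ)) * e n := by
      filter_upwards [eventually_ge_atTop 1] with n hn
      have hn0 : (0 : ℝ) < (n : ℝ) := by exact_mod_cast hn
      have hnm0 : (0 : ℝ) < ((n + m : ℕ) : ℝ) := by positivity
      have hx1 : (1 : ℝ) ≤ (c (n + m) i : ℝ) := hc1 _ _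
      have hx0 : (0 : ℝ) < (c (n + m) i : ℝ) := lt_of_lt_of_le one_pos hx1
      have harith : 1 / (n : ℝ) =
          1 / ((n + m : ℕ) : ℝ) + (m : ℝ) / ((n : ℝ) * ((n + m : ℕ) : ℝ)) := by
        push_cast
        field_simp
      calc ((c n j : ℝ)) ^ (1 / (n : ℝ))
          ≤ ((c (n + m) i : ℝ)) ^ (1 / (n : ℝ)) :=
            Real.rpow_le_rpow (by positivity) (by exact_mod_cast hshift n) (by positivity)
        _ = ((c (n + m) i : ℝ)) ^ (1 / ((n + m : ℕ) : ℝ)) *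
              ((c (n + m) i : ℝ)) ^ ((m : ℝ) / ((n : ℝ) * ((n + m : ℕ) : ℝ))) := by
            rw [harith, Real.rpow_add hx0]
        _ ≤ ((c (n + m) i : ℝ)) ^ (1 / ((n + m : ℕ) : ℝ)) * e n := by
            refine mul_le_mul_of_nonneg_left ?_ (by positivity)
            have hd0 : (0 : ℝ) ≤ (m : ℝ) / ((n : ℝ) * ((n + m : ℕ) : ℝ)) := by positivity
            calc ((c (n + m) i : ℝ)) ^ ((m : ℝ) / ((n : ℝ) * ((n + m : ℕ) : ℝ)))
                ≤ (B ^ (n + m)) ^ ((m : ℝ) / ((n : ℝ) * ((n + m : ℕ) : ℝ))) :=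
                  Real.rpow_le_rpow (by positivity) (hcB (n + m) i) hd0
              _ = e n := by
                  rw [hedef, ← Real.rpow_natCast B (n + m), ← Real.rpow_mul hB0.le]
                  congr 1
                  push_cast
                  field_simp
        -- done
    -- limsup bookkeeping
    have hb_j : IsCoboundedUnder (· ≤ ·) atTop (fun n : ℕ => ((c n j : ℝ)) ^ (1 / (n : ℝ))) :=
      IsBoundedUnder.isCoboundedUnder_le
        (isBoundedUnder_of_eventually_ge (Filter.Eventually.of_forall fun n => hu1 j n))
    have hb_shift : IsBoundedUnder (· ≤ ·) atTop
        (fun n : ℕ => ((c (n + m) i : ℝ)) ^ (1 / ((n + m : ℕ) : ℝ))) :=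
      isBoundedUnder_of_eventually_le (Filter.Eventually.of_forall fun n => huB i (n + m))
    have hb_e : IsBoundedUnder (· ≤ ·) atTop e := he1.isBoundedUnder_le
    have hnn_shift : (0 : ℕ → ℝ) ≤ᶠ[atTop]
        (fun n : ℕ => ((c (n + m) i : ℝ)) ^ (1 / ((n + m : ℕ) : ℝ))) :=
      Filter.Eventually.of_forall fun n => le_trans zero_le_one (hu1 i (n + m))
    have hnn_e : (0 : ℕ → ℝ) ≤ᶠ[atTop] e :=
      Filter.Eventually.of_forall fun n => Real.rpow_nonneg hB0.le _
    have hb_prod : IsBoundedUnder (· ≤ ·) atTop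
        ((fun n : ℕ => ((c (n + m) i : ℝ)) ^ (1 / ((n + m : ℕ) : ℝ))) * e) :=
      isBoundedUnder_le_mul_of_nonneg hnn_shift.frequently hb_shift hnn_e hb_e
    calc limsup (fun n : ℕ => ((c n j : ℝ)) ^ (1 / (n : ℝ))) atTop
        ≤ limsup ((fun n : ℕ => ((c (n + m) i : ℝ)) ^ (1 / ((n + m : ℕ) : ℝ))) * e) atTop :=
          limsup_le_limsup hev hb_j hb_prod
      _ ≤ limsup (fun n : ℕ => ((c (n + m) i : ℝ)) ^ (1 / ((n + m : ℕ) : ℝ))) atTop *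
            limsup e atTop :=
          limsup_mul_le hnn_shift.frequently hb_shift hnn_e hb_e
      _ = limsup (fun n : ℕ => ((c n i : ℝ)) ^ (1 / (n : ℝ))) atTop * 1 := by
          rw [he1.limsup_eq]
          congr 1
          exact Filter.limsup_nat_add (fun n : ℕ => ((c n i : ℝ)) ^ (1 / (n : ℝ))) m
      _ = limsup (fun n : ℕ => ((c n i : ℝ)) ^ (1 / (n : ℝ))) atTop := mul_one _
  intro i j
  exact le_antisymm (key j i) (key i j)
end
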